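/- Let X ⊆ A^ℤ be an aperiodic subshift having at most L right asymptotic tails and at most L left asymptotic tails. Then X has at most 2L²·(#A)² centered asymptotic pairs (counting centered right asymptotic and centered left asymptotic pairs together). -/

import Mathlib

/-!
Each coordinate of a centered right asymptotic pair `(x, x')` has a right branch point at `0`.
In an aperiodic subshift a point cannot have the same right tail at two positions: it would be
eventually periodic, and a limit of its shifts would be a periodic point of `X`. Hence every
point has at most `L` right branch points, and it is determined up to shift by its tail and
letter at the first one. The pair is then determined by these two keys: two pairs with the same
keys differ by shifts, which agree by aperiodicity and vanish because both pairs are centered.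
This gives at most `(L·#A)²` centered right pairs; the left pairs are the right pairs of the
reflected subshift.
-/

namespace SAdicPaper

/-- A morphism between the free semigroups `A⁺ → B⁺`, determined by the (nonempty)
images of the letters. -/
structure Morphism (A : Type*) (B : Type*) where
  toFun : A → List B
  ne : ∀ a, toFun a ≠ []

namespace Morphism

universe u v

variable {A B C : Type*}

/-- The image of a word under a morphism. -/
def word (τ : Morphism A B) : List A → List B
  | [] => []
  | a :: w => τ.toFun a ++ τ.word w

theorem word_ne (τ : Morphism A B) {w : List A} (hw : w ≠ []) : τ.word w ≠ [] := by
  cases w with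
  | nil => exact absurd rfl hw
  | cons a w =>
    simp only [word]
    intro h
    exact τ.ne a (List.append_eq_nil_iff.mp h).1

/-- The identity morphism. -/
protected def id (A : Type*) : Morphism A A :=
  ⟨fun a => [a], fun a => by simp⟩

/-- Composition of morphisms. -/
def comp (τ : Morphism B C) (σ : Morphism A B) : Morphism A C :=
  ⟨fun a => τ.word (σ.toFun a), fun a => τ.word_ne (σ.ne a)⟩

/-- `|τ|₁ = ∑_{a ∈ A} |τ(a)|`. -/
def len1 (τ : Morphism A B) [Fintype A] : ℕ := ∑ a, (τ.toFun a).length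

/-- `τ` is `r`-proper: there are words `u, v` of length `r` such that every image `τ(a)`
starts with `u` and ends with `v`. -/
def RProper (τ : Morphism A B) (r : ℕ) : Prop :=
  ∃ u v : List B, u.length = r ∧ v.length = r ∧ ∀ a, u <+: τ.toFun a ∧ v <:+ τ.toFun a

/-- `τ` is proper, i.e. `1`-proper. -/
protected def Proper (τ : Morphism A B) : Prop := τ.RProper 1

/-- Every letter of `B` occurs in some image `τ(a)`. -/
def LetterOnto (τ : Morphism A B) : Prop := ∀ b : B, ∃ a : A, b ∈ τ.toFun a

/-- Every letter of `B` occurs in every image `τ(a)`. -/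
def Positive (τ : Morphism A B) : Prop := ∀ (a : A) (b : B), b ∈ τ.toFun a

/-- Transport a morphism along an equality of alphabets. -/
def castDom {A A' : Type u} {B : Type v} (h : A = A') (τ : Morphism A B) : Morphism A' B :=
  h ▸ τ

/-- The cut points of the biinfinite concatenation `⋯ τ(x₋₁) . τ(x₀) τ(x₁) ⋯`
(where `τ(x₀)` starts at coordinate `0`). -/
def cut (τ : Morphism A B) (x : ℤ → A) (j : ℤ) : ℤ :=
  if 0 ≤ j then ∑ i ∈ Finset.range j.toNat, ((τ.toFun (x (i : ℤ))).length : ℤ)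
  else -∑ i ∈ Finset.range (-j).toNat, ((τ.toFun (x (-(i : ℤ) - 1))).length : ℤ)

/-- The extension of a morphism to biinfinite sequences: `τ(x)` is the biinfinite
concatenation `⋯ τ(x₋₁) . τ(x₀) τ(x₁) ⋯`, with `τ(x₀)` starting at coordinate `0`. -/
noncomputable def seq (τ : Morphism A B) (x : ℤ → A) : ℤ → B := fun n =>
  letI := Classical.dec (∃ j : ℤ, τ.cut x j ≤ n ∧ n < τ.cut x (j + 1))
  if h : ∃ j : ℤ, τ.cut x j ≤ n ∧ n < τ.cut x (j + 1) then
    (τ.toFun (x h.choose)).getD (n - τ.cut x h.choose).toNat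
      ((τ.toFun (x 0)).head (τ.ne (x 0)))
  else (τ.toFun (x 0)).head (τ.ne (x 0))

end Morphism

variable {A B : Type*}

/-- The shift map `T`. -/
def shift (x : ℤ → A) : ℤ → A := fun n => x (n + 1)

/-- The iterate `T^k` of the shift. -/
def shiftZ (k : ℤ) (x : ℤ → A) : ℤ → A := fun n => x (n + k)

/-- A subshift: a closed shift-invariant set of biinfinite sequences. -/
def IsSubshift [TopologicalSpace A] (X : Set (ℤ → A)) : Prop :=
  IsClosed X ∧ ∀ k : ℤ, shiftZ k '' X = X

/-- Every point of `X` has infinite orbit (no nonzero period). -/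
def Aperiodic (X : Set (ℤ → A)) : Prop :=
  ∀ x ∈ X, ∀ k : ℤ, k ≠ 0 → shiftZ k x ≠ x

/-- The shift orbit of a point. -/
def orbit (x : ℤ → A) : Set (ℤ → A) := {y | ∃ k : ℤ, y = shiftZ k x}

/-- A minimal subshift: every orbit is dense. -/
def IsMinimalSubshift [TopologicalSpace A] (X : Set (ℤ → A)) : Prop :=
  IsSubshift X ∧ X.Nonempty ∧ ∀ x ∈ X, X ⊆ closure (orbit x)

/-- A factor map between subshifts. -/
def IsFactorMap [TopologicalSpace A] [TopologicalSpace B]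
    (X : Set (ℤ → A)) (Y : Set (ℤ → B)) (π : (ℤ → A) → (ℤ → B)) : Prop :=
  ContinuousOn π X ∧ π '' X = Y ∧ ∀ x ∈ X, π (shift x) = shift (π x)

/-- A conjugacy: a bijective factor map. -/
def IsConjugacy [TopologicalSpace A] [TopologicalSpace B]
    (X : Set (ℤ → A)) (Y : Set (ℤ → B)) (π : (ℤ → A) → (ℤ → B)) : Prop :=
  IsFactorMap X Y π ∧ Set.InjOn π X

/-- Two subshifts are conjugate. -/
def Conjugate [TopologicalSpace A] [TopologicalSpace B]
    (X : Set (ℤ → A)) (Y : Set (ℤ → B)) : Prop :=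
  ∃ π, IsConjugacy X Y π

/-- `⋃_{k ∈ ℤ} T^k τ(X)`. -/
def morphImage (τ : Morphism A B) (X : Set (ℤ → A)) : Set (ℤ → B) :=
  {y | ∃ k : ℤ, ∃ x ∈ X, y = shiftZ k (τ.seq x)}

/-- The finite subword `x_{[i, i+m)}` of a biinfinite sequence. -/
def subword (x : ℤ → A) (i : ℤ) (m : ℕ) : List A :=
  (List.range m).map fun t => x (i + (t : ℤ))

/-- A centered `τ`-factorization `(k, x)` of `y` in `X`. -/
def IsCenteredFactorization (τ : Morphism A B) (X : Set (ℤ → A))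
    (y : ℤ → B) (k : ℤ) (x : ℤ → A) : Prop :=
  x ∈ X ∧ y = shiftZ k (τ.seq x) ∧ 0 ≤ k ∧ k < ((τ.toFun (x 0)).length : ℤ)

/-- The pair `(X, τ)` is recognizable: every point has at most one centered
`τ`-factorization in `X`. -/
def Recognizable (X : Set (ℤ → A)) (τ : Morphism A B) : Prop :=
  ∀ y k x k' x', IsCenteredFactorization τ X y k x →
    IsCenteredFactorization τ X y k' x' → k = k' ∧ x = x'

/-- Centered right asymptotic pair. -/
def CenteredRightAsymptotic (x x' : ℤ → A) : Prop :=
  (∀ n : ℤ, 0 < n → x n = x' n) ∧ x 0 ≠ x' 0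

/-- Centered left asymptotic pair. -/
def CenteredLeftAsymptotic (x x' : ℤ → A) : Prop :=
  (∀ n : ℤ, n < 0 → x n = x' n) ∧ x 0 ≠ x' 0

/-- Right asymptotic pair. -/
def RightAsymptotic (x x' : ℤ → A) : Prop :=
  ∃ k : ℤ, CenteredRightAsymptotic (shiftZ k x) (shiftZ k x')

/-- Left asymptotic pair. -/
def LeftAsymptotic (x x' : ℤ → A) : Prop :=
  ∃ k : ℤ, CenteredLeftAsymptotic (shiftZ k x) (shiftZ k x')

/-- A distal factor map: points of a common fiber stay at a distance bounded below along
the orbit (stated for the standard metric `dist(x, y) = 2^{-min{|i| : xᵢ ≠ yᵢ}}`). -/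
def IsDistalFactor (X : Set (ℤ → A)) (π : (ℤ → A) → (ℤ → B)) : Prop :=
  ∀ x ∈ X, ∀ x' ∈ X, π x = π x' → x ≠ x' →
    ∃ m : ℕ, ∀ k : ℤ, ∃ i : ℤ, |i| ≤ (m : ℤ) ∧ x (k + i) ≠ x' (k + i)

/-- `π` is almost `k`-to-`1`: the fibers over a residual subset of `Y` have exactly `k`
elements. -/
def AlmostKto1 [TopologicalSpace A] [TopologicalSpace B]
    (X : Set (ℤ → A)) (Y : Set (ℤ → B)) (π : (ℤ → A) → (ℤ → B)) (k : ℕ) : Prop :=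
  ∃ R : Set (ℤ → B), R ⊆ Y ∧ {y : ↥Y | (y : ℤ → B) ∈ R} ∈ residual ↥Y ∧
    ∀ y ∈ R, (X ∩ π ⁻¹' {y}).encard = (k : ℕ∞)

/-- `π` has radius `r`: it is given by a local code `ψ` of radius `r` on `Y`. -/
def HasRadius {C : Type*} (Y : Set (ℤ → B)) (π : (ℤ → B) → (ℤ → C)) (r : ℕ) : Prop :=
  ∃ ψ : (Fin (2 * r + 1) → B) → C,
    ∀ y ∈ Y, ∀ i : ℤ, π y i = ψ fun t => y (i - (r : ℤ) + ((t : ℕ) : ℤ))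

/-- A directive sequence `σ = (σ_n : A_{n+1}⁺ → A_n⁺)_{n ∈ ℕ}` with `A_0 = A0`;
here `alph n` is the alphabet `A_{n+1}`, `mor0 = σ_0` and `mor n = σ_{n+1}`. -/
structure DirectiveSeq (A0 : Type) where
  alph : ℕ → Type
  fin : ∀ n, Fintype (alph n)
  mor0 : Morphism (alph 0) A0
  mor : ∀ n, Morphism (alph (n + 1)) (alph n)

attribute [instance] DirectiveSeq.fin

namespace DirectiveSeq

variable {A0 B0 : Type}

/-- `σ_{[0, N+1)} : A_{N+1}⁺ → A_0⁺`. -/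
def down (S : DirectiveSeq A0) : ∀ N : ℕ, Morphism (S.alph N) A0
  | 0 => S.mor0
  | N + 1 => (S.down N).comp (S.mor N)

/-- `σ_{[n+1, n+N+1)} : A_{n+N+1}⁺ → A_{n+1}⁺`. -/
def seg (S : DirectiveSeq A0) (n : ℕ) : ∀ N : ℕ, Morphism (S.alph (n + N)) (S.alph n)
  | 0 => Morphism.id _
  | N + 1 => (S.seg n N).comp (S.mor (n + N))

/-- The generated S-adic subshift `X_σ = X_σ^{(0)}`. -/
def X0 (S : DirectiveSeq A0) : Set (ℤ → A0) :=
  {x | ∀ (i : ℤ) (m : ℕ), ∃ (N : ℕ) (a : S.alph N), subword x i m <:+: (S.down N).toFun a}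

/-- The level `X_σ^{(n+1)}` of the S-adic subshift. -/
def levelSet (S : DirectiveSeq A0) (n : ℕ) : Set (ℤ → S.alph n) :=
  {x | ∀ (i : ℤ) (m : ℕ), ∃ (N : ℕ) (a : S.alph (n + (N + 1))),
    subword x i m <:+: (S.seg n (N + 1)).toFun a}

/-- `⟨σ_{[0,N)}⟩ → ∞`. -/
def EverywhereGrowing (S : DirectiveSeq A0) : Prop :=
  ∀ m : ℕ, ∃ N0 : ℕ, ∀ N ≥ N0, ∀ a : S.alph N, m ≤ ((S.down N).toFun a).length

protected def Proper (S : DirectiveSeq A0) : Prop :=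
  S.mor0.Proper ∧ ∀ n, (S.mor n).Proper

protected def LetterOnto (S : DirectiveSeq A0) : Prop :=
  S.mor0.LetterOnto ∧ ∀ n, (S.mor n).LetterOnto

protected def Primitive (S : DirectiveSeq A0) : Prop :=
  (∃ N, (S.down N).Positive) ∧ ∀ n, ∃ N, (S.seg n (N + 1)).Positive

protected def Recognizable (S : DirectiveSeq A0) : Prop :=
  SAdicPaper.Recognizable (S.levelSet 0) S.mor0 ∧
    ∀ n, SAdicPaper.Recognizable (S.levelSet (n + 1)) (S.mor n)

/-- The alphabet rank `AR(σ) = liminf_n #A_n`. -/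
noncomputable def rank (S : DirectiveSeq A0) : ℕ∞ :=
  Filter.liminf (fun n => (Fintype.card (S.alph n) : ℕ∞)) Filter.atTop

/-- The contraction `(σ_{[n_k, n_{k+1})})_{k ∈ ℕ}` of a directive sequence. -/
def contract (S : DirectiveSeq A0) (n : ℕ → ℕ) (hn : StrictMono n) (h0 : n 0 = 0) :
    DirectiveSeq A0 where
  alph k := S.alph (n (k + 1) - 1)
  fin k := S.fin _
  mor0 := S.down (n 1 - 1)
  mor k := Morphism.castDom
    (congrArg S.alph
      (show (n (k + 1) - 1) + (n (k + 2) - n (k + 1)) = n (k + 2) - 1 by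
        have h2 := hn (show 0 < k + 1 by omega)
        have h3 : n (k + 1) ≤ n (k + 2) := hn.monotone (by omega)
        omega))
    (S.seg (n (k + 1) - 1) (n (k + 2) - n (k + 1)))

/-- `T` is a contraction of `S`. -/
def IsContraction (T S : DirectiveSeq A0) : Prop :=
  ∃ (n : ℕ → ℕ) (hn : StrictMono n) (h0 : n 0 = 0), T = S.contract n hn h0

/-- Two directive sequences are equivalent if both are contractions of a common one. -/
def Equivalent (S : DirectiveSeq A0) (T : DirectiveSeq A0) : Prop :=
  ∃ V : DirectiveSeq A0, IsContraction S V ∧ IsContraction T V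

end DirectiveSeq

/-- `X` is generated by a proper, primitive and recognizable directive sequence of
alphabet rank at most `K`. -/
def HasRankRep {A0 : Type} (X : Set (ℤ → A0)) (K : ℕ) : Prop :=
  ∃ S : DirectiveSeq A0, S.X0 = X ∧ S.Proper ∧ S.Primitive ∧ S.Recognizable ∧
    S.rank ≤ (K : ℕ∞)

/-- The topological rank of `X` equals `K`. -/
def TopRankEq {A0 : Type} (X : Set (ℤ → A0)) (K : ℕ) : Prop :=
  HasRankRep X K ∧ ∀ K' : ℕ, HasRankRep X K' → K ≤ K'

/-- A factor `φ : σ → τ` between directive sequences: `φ_0 : A_1⁺ → B_0⁺` (`phi0`) and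
`φ_{n+1} : A_{n+1}⁺ → B_{n+1}⁺` (`phi n`), with `φ_0 = τ_0 ∘ φ_1` and
`φ_n ∘ σ_n = τ_n ∘ φ_{n+1}` for `n ≥ 1`. -/
structure SeqFactor {A0 B0 : Type} (S : DirectiveSeq A0) (T : DirectiveSeq B0) where
  phi0 : Morphism (S.alph 0) B0
  phi : ∀ n, Morphism (S.alph n) (T.alph n)
  comm0 : phi0 = T.mor0.comp (phi 0)
  comm : ∀ n, (phi n).comp (S.mor n) = (T.mor n).comp (phi (n + 1))

namespace SeqFactor

variable {A0 B0 : Type} {S : DirectiveSeq A0} {T : DirectiveSeq B0}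

def LetterOnto (F : SeqFactor S T) : Prop :=
  F.phi0.LetterOnto ∧ ∀ n, (F.phi n).LetterOnto

def Proper (F : SeqFactor S T) : Prop :=
  F.phi0.Proper ∧ ∀ n, (F.phi n).Proper

end SeqFactor

end SAdicPaper

namespace SAdicPaper

variable {A : Type*}

theorem shiftZ_zero (x : ℤ → A) : shiftZ 0 x = x :=
  funext fun n => by simp [shiftZ]

theorem shiftZ_shiftZ (a b : ℤ) (x : ℤ → A) : shiftZ a (shiftZ b x) = shiftZ (a + b) x :=
  funext fun n => by simp only [shiftZ, add_assoc]

theorem eq_shiftZ_of_shiftZ_eq {a b : ℤ} {x y : ℤ → A} (h : shiftZ a x = shiftZ b y) :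
    y = shiftZ (a - b) x := by
  have := congrArg (shiftZ (-b)) h
  rwa [shiftZ_shiftZ, shiftZ_shiftZ, neg_add_cancel, shiftZ_zero, neg_add_eq_sub, eq_comm] at this

theorem IsSubshift.shiftZ_mem [TopologicalSpace A] {X : Set (ℤ → A)} (hX : IsSubshift X)
    {x : ℤ → A} (hx : x ∈ X) (k : ℤ) : shiftZ k x ∈ X :=
  hX.2 k ▸ ⟨x, hx, rfl⟩

section Periodicity

variable {u : ℤ → A} {d K : ℤ}

theorem eq_of_modEq_of_eventually_periodic (hd : 0 < d) (h : ∀ j ≥ K, u (j + d) = u j)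
    {i i' : ℤ} (hi : K ≤ i) (hi' : K ≤ i') (hii' : i ≡ i' [ZMOD d]) : u i = u i' := by
  have iterate : ∀ n : ℕ, ∀ j ≥ K, u (j + d * n) = u j := by
    intro n
    induction n with
    | zero => simp
    | succ n ih =>
      intro j hj
      rw [Nat.cast_succ, mul_add_one, ← add_assoc, h _ (by nlinarith), ih j hj]
  wlog hle : i ≤ i' generalizing i i'
  · exact (this hi' hi hii'.symm (le_of_not_ge hle)).symm
  obtain ⟨c, hc⟩ := Int.modEq_iff_dvd.mp hii'
  obtain ⟨n, rfl⟩ := Int.eq_ofNat_of_zero_le (show 0 ≤ c by nlinarith)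
  rw [show i' = i + d * n by linarith, iterate _ _ hi]

/-- The periodic point is the limit of `T^{dN} u` as `N → ∞`. -/
theorem IsSubshift.exists_periodic_of_eventually_periodic [TopologicalSpace A]
    {X : Set (ℤ → A)} (hX : IsSubshift X) (hu : u ∈ X) (hd : 0 < d)
    (h : ∀ j ≥ K, u (j + d) = u j) : ∃ z ∈ X, shiftZ d z = z := by
  set z : ℤ → A := fun j => u (K + (j - K) % d)
  have hzK : ∀ j, K ≤ K + (j - K) % d := fun j => by
    have := Int.emod_nonneg (j - K) hd.ne'
    omega
  have hz : ∀ j i, K ≤ i → i ≡ j [ZMOD d] → u i = z j := fun j i hi hij =>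
    eq_of_modEq_of_eventually_periodic hd h hi (hzK j)
      (hij.trans (by simpa using ((Int.mod_modEq (j - K) d).add_left K).symm))
  refine ⟨z, ?_, funext fun j => hz j _ (hzK (j + d)) ?_⟩
  · refine hX.1.mem_of_tendsto (f := fun N : ℕ => shiftZ (d * N) u) (b := Filter.atTop) ?_
      (Filter.Eventually.of_forall fun N => hX.shiftZ_mem hu _)
    refine tendsto_pi_nhds.mpr fun j => tendsto_const_nhds.congr' ?_
    filter_upwards [Filter.eventually_ge_atTop (K - j).toNat] with N hN
    exact (hz j _ (by nlinarith [Int.self_le_toNat (K - j)]) (by simp [Int.ModEq])).symm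
  · calc K + (j + d - K) % d ≡ j + d - K + K [ZMOD d] := by
          simpa [add_comm] using (Int.mod_modEq (j + d - K) d).add_left K
      _ ≡ j [ZMOD d] := by simp [Int.ModEq]

theorem Aperiodic.not_eventually_periodic [TopologicalSpace A] {X : Set (ℤ → A)}
    (hap : Aperiodic X) (hX : IsSubshift X) (hu : u ∈ X) (hd : d ≠ 0) :
    ¬ ∀ j ≥ K, u (j + d) = u j := by
  intro h
  obtain ⟨z, hzX, hz⟩ : ∃ z ∈ X, shiftZ |d| z = z := by
    rcases hd.lt_or_gt with hneg | hpos
    · refine hX.exists_periodic_of_eventually_periodic hu (K := K) (by simpa) fun j hj => ?_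
      rw [abs_of_neg hneg, ← h _ (by omega), neg_add_cancel_right]
    · exact hX.exists_periodic_of_eventually_periodic hu (by simpa) (abs_of_pos hpos ▸ h)
  exact hap z hzX |d| (abs_ne_zero.mpr hd) hz

end Periodicity

theorem CenteredRightAsymptotic.symm {x x' : ℤ → A} (h : CenteredRightAsymptotic x x') :
    CenteredRightAsymptotic x' x :=
  ⟨fun n hn => (h.1 n hn).symm, h.2.symm⟩

theorem CenteredRightAsymptotic.eq_zero_of_shiftZ {x x' : ℤ → A} {d : ℤ}
    (h : CenteredRightAsymptotic x x') (hd : CenteredRightAsymptotic (shiftZ d x) (shiftZ d x')) :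
    d = 0 := by
  rcases lt_trichotomy d 0 with hneg | hzero | hpos
  · exact absurd (by simpa [shiftZ] using hd.1 (-d) (by omega)) h.2
  · exact hzero
  · exact absurd (h.1 d hpos) (by simpa [shiftZ] using hd.2)

theorem CenteredRightAsymptotic.eq_of_shiftZ [TopologicalSpace A] {X : Set (ℤ → A)}
    (hX : IsSubshift X) (hap : Aperiodic X) {x x' : ℤ → A} (hx : x ∈ X) {d d' : ℤ}
    (h : CenteredRightAsymptotic x x') (hd : CenteredRightAsymptotic (shiftZ d x) (shiftZ d' x')) :
    d = d' := by
  by_contra hne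
  refine hap.not_eventually_periodic hX hx (sub_ne_zero.mpr hne) (K := max d' 0 + 1)
    fun j hj => ?_
  have := hd.1 (j - d') (by omega)
  simp only [shiftZ, sub_add_cancel, sub_add_eq_add_sub] at this
  rw [← add_sub_assoc, this, h.1 j (by omega)]

theorem exists_centeredRightAsymptotic_shiftZ {w w' : ℤ → A} (hne : w ≠ w')
    (h : ∀ j ≥ 0, w j = w' j) :
    ∃ k < 0, CenteredRightAsymptotic (shiftZ k w) (shiftZ k w') := by
  obtain ⟨k, hk, hmax⟩ := Int.exists_greatest_of_bdd (P := fun j => w j ≠ w' j)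
    ⟨-1, fun j hj => by by_contra! hlt; exact hj (h j (by omega))⟩
    (Function.ne_iff.mp hne)
  refine ⟨k, ?_, fun n hn => ?_, by simpa [shiftZ] using hk⟩
  · by_contra! hk0
    exact hk (h k hk0)
  · by_contra hn'
    have := hmax (n + k) hn'
    omega

def rightTails (X : Set (ℤ → A)) : Set (ℕ → A) :=
  {f | ∃ x ∈ X, ∃ x' ∈ X, CenteredRightAsymptotic x x' ∧
    f = fun n : ℕ => x ((n : ℤ) + 1)}

def leftTails (X : Set (ℤ → A)) : Set (ℕ → A) :=
  {f | ∃ x ∈ X, ∃ x' ∈ X, CenteredLeftAsymptotic x x' ∧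
    f = fun n : ℕ => x (-(n : ℤ) - 1)}

def centeredRightPairs (X : Set (ℤ → A)) : Set ((ℤ → A) × (ℤ → A)) :=
  {p | p.1 ∈ X ∧ p.2 ∈ X ∧ CenteredRightAsymptotic p.1 p.2}

def centeredLeftPairs (X : Set (ℤ → A)) : Set ((ℤ → A) × (ℤ → A)) :=
  {p | p.1 ∈ X ∧ p.2 ∈ X ∧ CenteredLeftAsymptotic p.1 p.2}

/-- The right tail `u_{(m, ∞)}`, indexed from `0`. -/
def tailFrom (u : ℤ → A) (m : ℤ) : ℕ → A := fun n => shiftZ m u ((n : ℤ) + 1)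

def IsRightBranchPoint (X : Set (ℤ → A)) (u : ℤ → A) (m : ℤ) : Prop :=
  ∃ v ∈ X, CenteredRightAsymptotic (shiftZ m u) v

theorem CenteredRightAsymptotic.isRightBranchPoint_zero {X : Set (ℤ → A)} {x x' : ℤ → A}
    (hx' : x' ∈ X) (h : CenteredRightAsymptotic x x') : IsRightBranchPoint X x 0 :=
  ⟨x', hx', by rwa [shiftZ_zero]⟩

noncomputable def firstRightBranchPoint (X : Set (ℤ → A)) (u : ℤ → A) : ℤ :=
  sInf {m | IsRightBranchPoint X u m}

noncomputable def rightKey (X : Set (ℤ → A)) (u : ℤ → A) : (ℕ → A) × A :=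
  (tailFrom u (firstRightBranchPoint X u), u (firstRightBranchPoint X u))

section RightBranchPoints

variable [TopologicalSpace A] {X : Set (ℤ → A)} {u : ℤ → A} {m : ℤ}

theorem tailFrom_mem_rightTails (hX : IsSubshift X) (hu : u ∈ X)
    (hm : IsRightBranchPoint X u m) : tailFrom u m ∈ rightTails X :=
  let ⟨v, hv, h⟩ := hm
  ⟨_, hX.shiftZ_mem hu m, v, hv, h, rfl⟩

theorem injective_tailFrom (hX : IsSubshift X) (hap : Aperiodic X) (hu : u ∈ X) :
    Function.Injective (tailFrom u) := by
  intro a b hab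
  by_contra hne
  refine hap.not_eventually_periodic hX hu (sub_ne_zero.mpr (Ne.symm hne)) (K := a + 1)
    fun j hj => ?_
  have := congrFun hab (j - a - 1).toNat
  simp only [tailFrom, shiftZ, Int.toNat_of_nonneg (show 0 ≤ j - a - 1 by omega)] at this
  convert this.symm using 2 <;> ring

theorem finite_setOf_isRightBranchPoint (hX : IsSubshift X) (hap : Aperiodic X) (hu : u ∈ X)
    (hfin : (rightTails X).Finite) : {m | IsRightBranchPoint X u m}.Finite :=
  Set.Finite.of_finite_image
    (hfin.subset (Set.image_subset_iff.mpr fun _ hm => tailFrom_mem_rightTails hX hu hm))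
    (injective_tailFrom hX hap hu).injOn

theorem isLeast_firstRightBranchPoint (hX : IsSubshift X) (hap : Aperiodic X)
    (hu : u ∈ X) (hfin : (rightTails X).Finite) (hm : IsRightBranchPoint X u m) :
    IsLeast {m | IsRightBranchPoint X u m} (firstRightBranchPoint X u) :=
  have hbdd := (finite_setOf_isRightBranchPoint hX hap hu hfin).bddBelow
  ⟨Int.csInf_mem ⟨m, hm⟩ hbdd, fun _ h => csInf_le hbdd h⟩

/-- A disagreement to the left of `m` would create an earlier branch point of `u`. -/
theorem shiftZ_eq_of_tailFrom_eq {u' : ℤ → A} {m' : ℤ} (hX : IsSubshift X) (hu' : u' ∈ X)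
    (hm : m ∈ lowerBounds {m | IsRightBranchPoint X u m})
    (htail : tailFrom u m = tailFrom u' m') (hletter : u m = u' m') :
    shiftZ m u = shiftZ m' u' := by
  by_contra hne
  obtain ⟨k, hk, hkm⟩ := exists_centeredRightAsymptotic_shiftZ hne fun j hj => by
    rcases hj.eq_or_lt with rfl | hpos
    · simpa [shiftZ] using hletter
    · have := congrFun htail (j - 1).toNat
      simp only [tailFrom, Int.toNat_of_nonneg (show 0 ≤ j - 1 by omega), sub_add_cancel] at this
      exact this
  rw [shiftZ_shiftZ, shiftZ_shiftZ] at hkm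
  have := hm ⟨_, hX.shiftZ_mem hu' _, hkm⟩
  omega

theorem rightKey_mem (hX : IsSubshift X) (hap : Aperiodic X) (hfin : (rightTails X).Finite)
    (hu : u ∈ X) (hm : IsRightBranchPoint X u m) : rightKey X u ∈ rightTails X ×ˢ Set.univ :=
  ⟨tailFrom_mem_rightTails hX hu (isLeast_firstRightBranchPoint hX hap hu hfin hm).1, trivial⟩

theorem shiftZ_eq_of_rightKey_eq {u' : ℤ → A} (hX : IsSubshift X) (hap : Aperiodic X)
    (hfin : (rightTails X).Finite) (hu : u ∈ X) (hm : IsRightBranchPoint X u m) (hu' : u' ∈ X)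
    (h : rightKey X u = rightKey X u') :
    shiftZ (firstRightBranchPoint X u) u = shiftZ (firstRightBranchPoint X u') u' :=
  shiftZ_eq_of_tailFrom_eq hX hu' (isLeast_firstRightBranchPoint hX hap hu hfin hm).2
    (congrArg Prod.fst h) (congrArg Prod.snd h)

theorem injOn_rightKey_centeredRightPairs (hX : IsSubshift X) (hap : Aperiodic X)
    (hfin : (rightTails X).Finite) :
    Set.InjOn (fun p => (rightKey X p.1, rightKey X p.2)) (centeredRightPairs X) := by
  rintro ⟨x, x'⟩ ⟨hx : x ∈ X, hx' : x' ∈ X, h : CenteredRightAsymptotic x x'⟩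
    ⟨y, y'⟩ ⟨hy : y ∈ X, hy' : y' ∈ X, hy_pair : CenteredRightAsymptotic y y'⟩ hkey
  simp only [Prod.mk.injEq] at hkey ⊢
  have hxy := eq_shiftZ_of_shiftZ_eq
    (shiftZ_eq_of_rightKey_eq hX hap hfin hx (h.isRightBranchPoint_zero hx') hy hkey.1)
  have hxy' := eq_shiftZ_of_shiftZ_eq
    (shiftZ_eq_of_rightKey_eq hX hap hfin hx' (h.symm.isRightBranchPoint_zero hx) hy' hkey.2)
  rw [hxy, hxy'] at hy_pair
  have hd := h.eq_of_shiftZ hX hap hx hy_pair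
  rw [← hd] at hy_pair hxy'
  rw [h.eq_zero_of_shiftZ hy_pair, shiftZ_zero] at hxy hxy'
  exact ⟨hxy.symm, hxy'.symm⟩

theorem encard_centeredRightPairs_le [Fintype A] (hX : IsSubshift X) (hap : Aperiodic X)
    (hfin : (rightTails X).Finite) :
    (centeredRightPairs X).encard ≤ ((rightTails X).encard * Fintype.card A) ^ 2 :=
  calc (centeredRightPairs X).encard
      ≤ ((rightTails X ×ˢ Set.univ) ×ˢ (rightTails X ×ˢ (Set.univ : Set A))).encard :=
        Set.encard_le_encard_of_injOn
          (fun _ ⟨hx, hx', h⟩ => ⟨rightKey_mem hX hap hfin hx (h.isRightBranchPoint_zero hx'),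
            rightKey_mem hX hap hfin hx' (h.symm.isRightBranchPoint_zero hx)⟩)
          (injOn_rightKey_centeredRightPairs hX hap hfin)
    _ = ((rightTails X).encard * Fintype.card A) ^ 2 := by
        simp [Set.encard_prod, sq]

end RightBranchPoints

def reflect (x : ℤ → A) : ℤ → A := fun n => x (-n)

theorem reflect_involutive : Function.Involutive (reflect (A := A)) :=
  fun x => funext fun n => by simp [reflect]

theorem shiftZ_reflect (k : ℤ) (x : ℤ → A) : shiftZ k (reflect x) = reflect (shiftZ (-k) x) :=
  funext fun n => congrArg x (neg_add n k)

theorem centeredRightAsymptotic_reflect_iff {x x' : ℤ → A} :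
    CenteredRightAsymptotic (reflect x) (reflect x') ↔ CenteredLeftAsymptotic x x' := by
  simp only [CenteredRightAsymptotic, CenteredLeftAsymptotic, reflect, neg_zero]
  constructor <;> rintro ⟨h, h0⟩ <;> refine ⟨fun n hn => ?_, h0⟩
  · simpa using h (-n) (by omega)
  · exact h (-n) (by omega)

theorem rightTails_image_reflect_subset (X : Set (ℤ → A)) :
    rightTails (reflect '' X) ⊆ leftTails X := by
  rintro f ⟨_, ⟨y, hy, rfl⟩, _, ⟨y', hy', rfl⟩, h, rfl⟩
  exact ⟨y, hy, y', hy', centeredRightAsymptotic_reflect_iff.mp h,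
    funext fun n => congrArg y (neg_add' _ _)⟩

theorem Aperiodic.image_reflect {X : Set (ℤ → A)} (hap : Aperiodic X) :
    Aperiodic (reflect '' X) := by
  rintro _ ⟨x, hx, rfl⟩ k hk hper
  rw [shiftZ_reflect] at hper
  exact hap x hx (-k) (neg_ne_zero.mpr hk) (reflect_involutive.injective hper)

section Reflection

variable [TopologicalSpace A] {X : Set (ℤ → A)}

theorem IsSubshift.image_reflect (hX : IsSubshift X) : IsSubshift (reflect '' X) := by
  refine ⟨?_, fun k => ?_⟩
  · rw [reflect_involutive.image_eq_preimage_symm]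
    exact hX.1.preimage (continuous_pi fun n => continuous_apply (-n))
  · rw [Set.image_image, funext (shiftZ_reflect k), ← Set.image_image, hX.2]

theorem encard_centeredLeftPairs_le [Fintype A] (hX : IsSubshift X) (hap : Aperiodic X)
    (hfin : (leftTails X).Finite) :
    (centeredLeftPairs X).encard ≤ ((leftTails X).encard * Fintype.card A) ^ 2 :=
  calc (centeredLeftPairs X).encard ≤ (centeredRightPairs (reflect '' X)).encard :=
        Set.encard_le_encard_of_injOn (f := Prod.map reflect reflect)
          (fun _ ⟨hx, hx', h⟩ => ⟨Set.mem_image_of_mem _ hx, Set.mem_image_of_mem _ hx',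
            centeredRightAsymptotic_reflect_iff.mpr h⟩)
          (reflect_involutive.injective.prodMap reflect_involutive.injective).injOn
    _ ≤ ((rightTails (reflect '' X)).encard * Fintype.card A) ^ 2 :=
        encard_centeredRightPairs_le hX.image_reflect hap.image_reflect
          (hfin.subset (rightTails_image_reflect_subset X))
    _ ≤ ((leftTails X).encard * Fintype.card A) ^ 2 := by
        gcongr
        exact rightTails_image_reflect_subset X

end Reflection

theorem statement19_general {A : Type} [Fintype A] [TopologicalSpace A]
    (X : Set (ℤ → A)) (L : ℕ)
    (hX : IsSubshift X) (hap : Aperiodic X)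
    (hR : {f : ℕ → A | ∃ x ∈ X, ∃ x' ∈ X, CenteredRightAsymptotic x x' ∧
        f = fun n : ℕ => x ((n : ℤ) + 1)}.encard ≤ (L : ℕ∞))
    (hL : {f : ℕ → A | ∃ x ∈ X, ∃ x' ∈ X, CenteredLeftAsymptotic x x' ∧
        f = fun n : ℕ => x (-(n : ℤ) - 1)}.encard ≤ (L : ℕ∞)) :
    {p : (ℤ → A) × (ℤ → A) | p.1 ∈ X ∧ p.2 ∈ X ∧
        (CenteredRightAsymptotic p.1 p.2 ∨ CenteredLeftAsymptotic p.1 p.2)}.encard ≤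
      ((2 * L ^ 2 * Fintype.card A ^ 2 : ℕ) : ℕ∞) := by
  change (rightTails X).encard ≤ L at hR
  change (leftTails X).encard ≤ L at hL
  have hright := encard_centeredRightPairs_le hX hap (Set.finite_of_encard_le_coe hR)
  have hleft := encard_centeredLeftPairs_le hX hap (Set.finite_of_encard_le_coe hL)
  calc _ ≤ (centeredRightPairs X ∪ centeredLeftPairs X).encard := by
        refine Set.encard_mono ?_
        rintro p ⟨hx, hx', h | h⟩
        exacts [Or.inl ⟨hx, hx', h⟩, Or.inr ⟨hx, hx', h⟩]
    _ ≤ (centeredRightPairs X).encard + (centeredLeftPairs X).encard := Set.encard_union_le _ _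
    _ ≤ (L * Fintype.card A) ^ 2 + (L * Fintype.card A) ^ 2 :=
        add_le_add (hright.trans (by gcongr)) (hleft.trans (by gcongr))
    _ = ((2 * L ^ 2 * Fintype.card A ^ 2 : ℕ) : ℕ∞) := by push_cast; ring

/-- an aperiodic subshift with at most `L` right asymptotic tails and at
most `L` left asymptotic tails has at most `2L²(#A)²` centered asymptotic pairs. -/
theorem statement19 {A : Type} [Fintype A] [TopologicalSpace A] [DiscreteTopology A]
    (X : Set (ℤ → A)) (L : ℕ)
    (hX : IsSubshift X) (hap : Aperiodic X)
    (hR : {f : ℕ → A | ∃ x ∈ X, ∃ x' ∈ X, CenteredRightAsymptotic x x' ∧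
        f = fun n : ℕ => x ((n : ℤ) + 1)}.encard ≤ (L : ℕ∞))
    (hL : {f : ℕ → A | ∃ x ∈ X, ∃ x' ∈ X, CenteredLeftAsymptotic x x' ∧
        f = fun n : ℕ => x (-(n : ℤ) - 1)}.encard ≤ (L : ℕ∞)) :
    {p : (ℤ → A) × (ℤ → A) | p.1 ∈ X ∧ p.2 ∈ X ∧
        (CenteredRightAsymptotic p.1 p.2 ∨ CenteredLeftAsymptotic p.1 p.2)}.encard ≤
      ((2 * L ^ 2 * Fintype.card A ^ 2 : ℕ) : ℕ∞) :=
  statement19_general X L hX hap hR hL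

end SAdicPaper
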